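/- Let Φ be a quantum channel from d_A×d_A to d_B×d_B complex matrices with Choi state J(Φ), let k ≥ 1, and let Ψ^{(k)} = Σ_{i=1}^k E_{ii} ⊗ E_{ii} on ℂ^k ⊗ ℂ^k. Then P_succ(Φ,k) equals the supremum, over positive semidefinite matrices W_{AĀ} on ℂ^{d_A} ⊗ ℂ^k and W_{BB̄} on ℂ^{d_B} ⊗ ℂ^k satisfying tr(W_{AĀ}) = 1, tr(W_{BB̄}) = 1, tr_A(W_{AĀ}) = I_k/k (partial trace over the ℂ^{d_A} factor) and tr_{B̄}(W_{BB̄}) = I_{d_B}/d_B (partial trace over the ℂ^k factor), of the quantity d_A·d_B · tr[ (J(Φ)_{AB} ⊗ Ψ^{(k)}_{ĀB̄}) · (W_{AĀ} ⊗ W_{BB̄}) ], where the trace is taken on ℂ^{d_A} ⊗ ℂ^k ⊗ ℂ^{d_B} ⊗ ℂ^k and the subscripts indicate on which tensor factors each operator acts (identity on the others). -/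

import Mathlib

open Matrix Kronecker BigOperators
open scoped ComplexOrder

noncomputable section

/-- The trace norm (sum of singular values) of a complex matrix: `tr √(AᴴA)`. -/
def traceNorm {m n : Type*} [Fintype m] [Fintype n] [DecidableEq n] (A : Matrix m n ℂ) : ℝ :=
  ((Matrix.posSemidef_conjTranspose_mul_self A).isHermitian.cfc Real.sqrt).trace.re

/-- A density matrix: positive semidefinite with trace one. -/
def IsDensity {n : Type*} [Fintype n] [DecidableEq n] (ρ : Matrix n n ℂ) : Prop :=
  ρ.PosSemidef ∧ ρ.trace = 1

/-- Trace norm contraction coefficient of a map on matrices. -/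
def etaTr {dA dB : ℕ} (Φ : Matrix (Fin dA) (Fin dA) ℂ → Matrix (Fin dB) (Fin dB) ℂ) : ℝ :=
  sSup {r : ℝ | ∃ ρ σ : Matrix (Fin dA) (Fin dA) ℂ, IsDensity ρ ∧ IsDensity σ ∧ ρ ≠ σ ∧
    r = traceNorm (Φ ρ - Φ σ) / traceNorm (ρ - σ)}

/-- Optimal success probability for transmitting one of `k` messages through `Φ`. -/
def Psucc {dA dB : ℕ} (Φ : Matrix (Fin dA) (Fin dA) ℂ → Matrix (Fin dB) (Fin dB) ℂ)
    (k : ℕ) : ℝ :=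
  sSup {r : ℝ | ∃ (M : Fin k → Matrix (Fin dB) (Fin dB) ℂ)
      (ρ : Fin k → Matrix (Fin dA) (Fin dA) ℂ),
    (∀ i, (M i).PosSemidef) ∧ (∑ i, M i = 1) ∧ (∀ i, IsDensity (ρ i)) ∧
    r = (1 / (k : ℝ)) * ∑ i, ((M i * Φ (ρ i)).trace).re}

/-- The Euclidean (ℓ₂) norm of a complex vector. -/
def l2norm {n : Type*} [Fintype n] (v : n → ℂ) : ℝ :=
  Real.sqrt (∑ i, ‖v i‖ ^ 2)

/-- Choi state of a map on matrices: `(1/dA) ∑ᵢⱼ Eᵢⱼ ⊗ Φ(Eᵢⱼ)`. -/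
def choi {dA dB : ℕ} (Φ : Matrix (Fin dA) (Fin dA) ℂ → Matrix (Fin dB) (Fin dB) ℂ) :
    Matrix (Fin dA × Fin dB) (Fin dA × Fin dB) ℂ :=
  (dA : ℂ)⁻¹ • ∑ i : Fin dA, ∑ j : Fin dA,
    (Matrix.single i j (1 : ℂ)) ⊗ₖ (Φ (Matrix.single i j (1 : ℂ)))

/-- Partial trace over the first tensor factor. -/
def ptraceFst {m n : Type*} [Fintype m] (W : Matrix (m × n) (m × n) ℂ) : Matrix n n ℂ :=
  Matrix.of fun b b' => ∑ a, W (a, b) (a, b')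

/-- Partial trace over the second tensor factor. -/
def ptraceSnd {m n : Type*} [Fintype n] (W : Matrix (m × n) (m × n) ℂ) : Matrix m m ℂ :=
  Matrix.of fun a a' => ∑ b, W (a, b) (a', b)

/-- The maximally correlated operator `Ψ⁽ᵏ⁾ = ∑ᵢ Eᵢᵢ ⊗ Eᵢᵢ` on `ℂᵏ ⊗ ℂᵏ`. -/
def PsiK (k : ℕ) : Matrix (Fin k × Fin k) (Fin k × Fin k) ℂ :=
  ∑ i : Fin k, Matrix.single i i (1 : ℂ) ⊗ₖ Matrix.single i i (1 : ℂ)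

/-- `J(Φ)_{AB} ⊗ Ψ⁽ᵏ⁾_{ĀB̄}` viewed as an operator on
`(ℂ^{dA} ⊗ ℂᵏ) ⊗ (ℂ^{dB} ⊗ ℂᵏ)` (with `J(Φ)` acting on the `A,B` factors and
`Ψ⁽ᵏ⁾` acting on the `Ā,B̄` factors). -/
def choiTensorPsi {dA dB : ℕ} (k : ℕ)
    (Φ : Matrix (Fin dA) (Fin dA) ℂ → Matrix (Fin dB) (Fin dB) ℂ) :
    Matrix ((Fin dA × Fin k) × (Fin dB × Fin k)) ((Fin dA × Fin k) × (Fin dB × Fin k)) ℂ :=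
  Matrix.of fun p q =>
    choi Φ (p.1.1, p.2.1) (q.1.1, q.2.1) * PsiK k (p.1.2, p.2.2) (q.1.2, q.2.2)

/-!
A code `(ρᵢ, Mᵢ)` gives the block-diagonal feasible pair `W_{AĀ} = (1/k) ⊕ᵢ ρᵢᵀ`,
`W_{BB̄} = (1/d_B) ⊕ᵢ Mᵢ`; conversely the diagonal blocks of a feasible pair, rescaled, form a
code, the partial-trace constraints being exactly `tr ρᵢ = 1` and `∑ᵢ Mᵢ = 1`. Because `Ψ⁽ᵏ⁾`
only sees the diagonal blocks, in both directions the objective is `(1/k) ∑ᵢ tr(Mᵢ Φ(ρᵢ))`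
(the transpose appears because `J(Φ)` pairs `Φ(E_{aa'})` with the `(a', a)` entry of `W_{AĀ}`).
-/

section BlockDiagonal

variable {m n : Type*} [Fintype n] [DecidableEq n]

theorem blockDiagonal_eq_sum_kronecker (M : n → Matrix m m ℂ) :
    blockDiagonal M = ∑ i, M i ⊗ₖ single i i (1 : ℂ) := by
  ext ⟨a, i⟩ ⟨a', i'⟩
  simp [blockDiagonal_apply, Matrix.sum_apply, single_apply, ite_and, eq_comm]

theorem posSemidef_blockDiagonal [Fintype m] [DecidableEq m] {M : n → Matrix m m ℂ}
    (hM : ∀ i, (M i).PosSemidef) :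
    (blockDiagonal M).PosSemidef := by
  rw [blockDiagonal_eq_sum_kronecker]
  refine posSemidef_sum _ fun i _ => (hM i).kronecker ?_
  rw [← diagonal_single]
  exact .diagonal (Pi.single_nonneg.2 zero_le_one)

end BlockDiagonal

section PartialTrace

variable {m n : Type*}

theorem ptraceSnd_eq_sum_blockDiag [Fintype n] (W : Matrix (m × n) (m × n) ℂ) :
    ptraceSnd W = ∑ i, blockDiag W i := by
  ext a a'
  simp [ptraceSnd, Matrix.sum_apply, blockDiag_apply]

theorem ptraceFst_apply_self [Fintype m] (W : Matrix (m × n) (m × n) ℂ) (i : n) :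
    ptraceFst W i i = (blockDiag W i).trace :=
  rfl

theorem ptraceFst_blockDiagonal [Fintype m] [DecidableEq n] (M : n → Matrix m m ℂ) :
    ptraceFst (blockDiagonal M) = diagonal fun i => (M i).trace := by
  ext i i'
  rcases eq_or_ne i i' with rfl | h
  · simp [ptraceFst, blockDiagonal_apply, trace]
  · simp [ptraceFst, blockDiagonal_apply, h]

end PartialTrace

section Kraus

variable {ι m n : Type*} [Fintype ι] [Fintype n]

theorem isLinearMap_sum_mul_mul_conjTranspose (K : ι → Matrix m n ℂ) :
    IsLinearMap ℂ fun x : Matrix n n ℂ => ∑ i, K i * x * (K i)ᴴ where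
  map_add x y := by simp only [Matrix.mul_add, Matrix.add_mul, Finset.sum_add_distrib]
  map_smul c x := by simp only [Matrix.mul_smul, Matrix.smul_mul, Finset.smul_sum]

theorem trace_sum_mul_mul_conjTranspose [Fintype m] [DecidableEq n] {K : ι → Matrix m n ℂ}
    (hK : ∑ i, (K i)ᴴ * K i = 1) (x : Matrix n n ℂ) :
    (∑ i, K i * x * (K i)ᴴ).trace = x.trace := by
  simp_rw [trace_sum, trace_mul_cycle (K _), ← trace_sum, ← Finset.sum_mul, hK, one_mul]

end Kraus

theorem LinearMap.map_matrix_eq_sum_smul_single {m n R M : Type*} [Fintype m] [Fintype n]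
    [DecidableEq m] [DecidableEq n] [Semiring R] [AddCommMonoid M] [Module R M]
    (Φ : Matrix m n R →ₗ[R] M) (X : Matrix m n R) :
    Φ X = ∑ a, ∑ a', X a a' • Φ (Matrix.single a a' 1) := by
  conv_lhs => rw [matrix_eq_sum_single X]
  simp only [map_sum, ← map_smul, smul_single, smul_eq_mul, mul_one]

-- `Psucc Φ k` is by definition `sSup (codeSuccessProbs Φ k)`.
def codeSuccessProbs {dA dB : ℕ} (Φ : Matrix (Fin dA) (Fin dA) ℂ → Matrix (Fin dB) (Fin dB) ℂ)
    (k : ℕ) : Set ℝ :=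
  {r : ℝ | ∃ (M : Fin k → Matrix (Fin dB) (Fin dB) ℂ)
      (ρ : Fin k → Matrix (Fin dA) (Fin dA) ℂ),
    (∀ i, (M i).PosSemidef) ∧ (∑ i, M i = 1) ∧ (∀ i, IsDensity (ρ i)) ∧
    r = (1 / (k : ℝ)) * ∑ i, ((M i * Φ (ρ i)).trace).re}

def bilinearProgramValues {dA dB : ℕ} (k : ℕ)
    (Φ : Matrix (Fin dA) (Fin dA) ℂ → Matrix (Fin dB) (Fin dB) ℂ) : Set ℝ :=
  {r : ℝ | ∃ (WA : Matrix (Fin dA × Fin k) (Fin dA × Fin k) ℂ)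
        (WB : Matrix (Fin dB × Fin k) (Fin dB × Fin k) ℂ),
        WA.PosSemidef ∧ WB.PosSemidef ∧
        WA.trace = 1 ∧ WB.trace = 1 ∧
        ptraceFst WA = (k : ℂ)⁻¹ • (1 : Matrix (Fin k) (Fin k) ℂ) ∧
        ptraceSnd WB = (dB : ℂ)⁻¹ • (1 : Matrix (Fin dB) (Fin dB) ℂ) ∧
        r = (dA : ℝ) * (dB : ℝ) *
          ((choiTensorPsi k Φ * (WA ⊗ₖ WB)).trace).re}

section Choi

variable {dA dB k : ℕ}

theorem choi_apply (Φ : Matrix (Fin dA) (Fin dA) ℂ → Matrix (Fin dB) (Fin dB) ℂ)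
    (a a' : Fin dA) (b b' : Fin dB) :
    choi Φ (a, b) (a', b') = (dA : ℂ)⁻¹ * Φ (single a a' 1) b b' := by
  simp [choi, Matrix.sum_apply, single_apply, ite_and]

theorem PsiK_apply (i j i' j' : Fin k) :
    PsiK k (i, j) (i', j') = if j = i ∧ i' = i ∧ j' = i then 1 else 0 := by
  simp only [PsiK, Matrix.sum_apply, kroneckerMap_apply, single_apply, ite_and, mul_ite,
    mul_one, mul_zero, Finset.sum_ite_eq', Finset.mem_univ, if_true]
  split_ifs <;> grind

theorem trace_choiTensorPsi_mul_kronecker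
    (Φ : Matrix (Fin dA) (Fin dA) ℂ →ₗ[ℂ] Matrix (Fin dB) (Fin dB) ℂ)
    (WA : Matrix (Fin dA × Fin k) (Fin dA × Fin k) ℂ)
    (WB : Matrix (Fin dB × Fin k) (Fin dB × Fin k) ℂ) :
    (choiTensorPsi k Φ * (WA ⊗ₖ WB)).trace
      = (dA : ℂ)⁻¹ * ∑ i, (blockDiag WB i * Φ (blockDiag WA i)ᵀ).trace := by
  have lhs : (choiTensorPsi k Φ * (WA ⊗ₖ WB)).trace = ∑ a, ∑ i, ∑ b, ∑ a', ∑ b',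
      (dA : ℂ)⁻¹ * Φ (single a a' 1) b b' * (WA (a', i) (a, i) * WB (b', i) (b, i)) := by
    simp only [trace, diag, mul_apply, Fintype.sum_prod_type, choiTensorPsi, of_apply,
      kroneckerMap_apply, choi_apply, PsiK_apply, ite_and, mul_ite, ite_mul, mul_zero, zero_mul,
      mul_one, Finset.sum_ite_eq', Finset.mem_univ, if_true, Finset.sum_ite_irrel,
      Finset.sum_const_zero]
  simp_rw [lhs, trace_mul_comm (blockDiag WB _),
    LinearMap.map_matrix_eq_sum_smul_single Φ (blockDiag _ _)ᵀ, Matrix.sum_mul, trace_sum,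
    Matrix.smul_mul, trace_smul, Finset.mul_sum]
  rw [Finset.sum_comm]
  refine Finset.sum_congr rfl fun i _ => Finset.sum_congr rfl fun a _ => ?_
  rw [Finset.sum_comm]
  refine Finset.sum_congr rfl fun a' _ => ?_
  simp only [trace, diag, mul_apply, smul_eq_mul, transpose_apply, blockDiag_apply,
    Finset.mul_sum]
  refine Finset.sum_congr rfl fun b _ => Finset.sum_congr rfl fun b' _ => ?_
  ring

theorem codeSuccessProbs_subset_bilinearProgramValues
    (Φ : Matrix (Fin dA) (Fin dA) ℂ →ₗ[ℂ] Matrix (Fin dB) (Fin dB) ℂ)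
    (hΦ : ∀ x, (Φ x).trace = x.trace) (hk : k ≠ 0) :
    codeSuccessProbs Φ k ⊆ bilinearProgramValues k Φ := by
  rintro _ ⟨M, ρ, hM, hMsum, hρ, rfl⟩
  have hρ₀ := (hρ ⟨0, Nat.pos_of_ne_zero hk⟩).2
  have hdA : dA ≠ 0 := by
    rintro rfl
    simp [trace] at hρ₀
  have hdB : dB ≠ 0 := by
    rintro rfl
    rw [← hΦ] at hρ₀
    simp [trace] at hρ₀
  refine ⟨blockDiagonal fun i => (k : ℂ)⁻¹ • (ρ i)ᵀ, blockDiagonal fun i => (dB : ℂ)⁻¹ • M i,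
    posSemidef_blockDiagonal fun i => (hρ i).1.transpose.smul (by positivity),
    posSemidef_blockDiagonal fun i => (hM i).smul (by positivity), ?_, ?_, ?_, ?_, ?_⟩
  · simp [trace_blockDiagonal, (hρ _).2, hk]
  · rw [trace_blockDiagonal, ← trace_sum, ← Finset.smul_sum, hMsum]
    simp [hdB]
  · ext i i'
    simp [ptraceFst_blockDiagonal, (hρ _).2, diagonal_apply, one_apply]
  · simp [ptraceSnd_eq_sum_blockDiag, ← Finset.smul_sum, hMsum]
  · rw [trace_choiTensorPsi_mul_kronecker]
    simp only [blockDiag_blockDiagonal, transpose_smul, transpose_transpose, map_smul,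
      Matrix.smul_mul, Matrix.mul_smul, trace_smul, smul_eq_mul, ← Finset.mul_sum, ← Complex.re_sum]
    simp only [← Complex.ofReal_natCast, ← Complex.ofReal_inv, Complex.re_ofReal_mul]
    field_simp

theorem bilinearProgramValues_subset_codeSuccessProbs
    (Φ : Matrix (Fin dA) (Fin dA) ℂ →ₗ[ℂ] Matrix (Fin dB) (Fin dB) ℂ) (hk : k ≠ 0) :
    bilinearProgramValues k Φ ⊆ codeSuccessProbs Φ k := by
  rintro _ ⟨WA, WB, hWA, hWB, htrA, -, hA, hB, rfl⟩
  have hdA : dA ≠ 0 := by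
    rintro rfl
    simp [trace] at htrA
  refine ⟨fun i => (dB : ℂ) • blockDiag WB i, fun i => (k : ℂ) • (blockDiag WA i)ᵀ,
    fun i => (hWB.submatrix _).smul (by positivity), ?_,
    fun i => ⟨(hWA.submatrix _).transpose.smul (by positivity), ?_⟩, ?_⟩
  · rcases eq_or_ne dB 0 with rfl | hdB
    · exact Subsingleton.elim _ _
    rw [← Finset.smul_sum, ← ptraceSnd_eq_sum_blockDiag, hB, smul_smul,
      mul_inv_cancel₀ (Nat.cast_ne_zero.2 hdB), one_smul]
  · rw [trace_smul, trace_transpose, ← ptraceFst_apply_self, hA]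
    simp [hk]
  · rw [trace_choiTensorPsi_mul_kronecker]
    simp only [map_smul, Matrix.smul_mul, Matrix.mul_smul, trace_smul, smul_eq_mul,
      ← Finset.mul_sum, ← Complex.re_sum]
    simp only [← Complex.ofReal_natCast, ← Complex.ofReal_inv, Complex.re_ofReal_mul]
    field_simp

end Choi

/-- `P_succ(Φ,k)` as a constrained bilinear program:
it equals the supremum of `dA·dB·tr[(J(Φ)⊗Ψ⁽ᵏ⁾)(W_{AĀ} ⊗ W_{BB̄})]` over positive
semidefinite `W_{AĀ}, W_{BB̄}` of trace one with `tr_A W_{AĀ} = I/k` and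
`tr_{B̄} W_{BB̄} = I/dB`. -/
theorem psucc_eq_bilinear_program {dA dB k : ℕ} {ι : Type} [Fintype ι]
    (hk : 1 ≤ k)
    (K : ι → Matrix (Fin dB) (Fin dA) ℂ)
    (hK : ∑ i, (K i)ᴴ * K i = 1)
    (Φ : Matrix (Fin dA) (Fin dA) ℂ → Matrix (Fin dB) (Fin dB) ℂ)
    (hΦ : ∀ x, Φ x = ∑ i, K i * x * (K i)ᴴ) :
    Psucc Φ k = sSup {r : ℝ |
      ∃ (WA : Matrix (Fin dA × Fin k) (Fin dA × Fin k) ℂ)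
        (WB : Matrix (Fin dB × Fin k) (Fin dB × Fin k) ℂ),
        WA.PosSemidef ∧ WB.PosSemidef ∧
        WA.trace = 1 ∧ WB.trace = 1 ∧
        ptraceFst WA = (k : ℂ)⁻¹ • (1 : Matrix (Fin k) (Fin k) ℂ) ∧
        ptraceSnd WB = (dB : ℂ)⁻¹ • (1 : Matrix (Fin dB) (Fin dB) ℂ) ∧
        r = (dA : ℝ) * (dB : ℝ) *
          ((choiTensorPsi k Φ * (WA ⊗ₖ WB)).trace).re} := by
  have hlin : IsLinearMap ℂ Φ := by
    simpa only [← funext hΦ] using isLinearMap_sum_mul_mul_conjTranspose K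
  obtain ⟨L, rfl⟩ : ∃ L : Matrix (Fin dA) (Fin dA) ℂ →ₗ[ℂ] Matrix (Fin dB) (Fin dB) ℂ, ⇑L = Φ :=
    ⟨hlin.mk' Φ, rfl⟩
  have htrace (x : Matrix (Fin dA) (Fin dA) ℂ) : (L x).trace = x.trace := by
    rw [hΦ, trace_sum_mul_mul_conjTranspose hK]
  have hk0 : k ≠ 0 := Nat.one_le_iff_ne_zero.1 hk
  exact congrArg sSup ((codeSuccessProbs_subset_bilinearProgramValues L htrace hk0).antisymm
    (bilinearProgramValues_subset_codeSuccessProbs L hk0))
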